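/- Let κ₀ ∈ ℂ with κ₀ ≠ 0 and let R > 0. Suppose h_n^{(1)}(κ₀R) ≠ 0 and z_n^{(1)}(κ₀R) ≠ 0 for all integers n ≥ 1. For each n ≥ 1 let c_n^U be the complex derivative at κ₀ of the function κ ↦ κ·h_n^{(1)}(κR)/z_n^{(1)}(κR), and let c_n^V be the complex derivative at κ₀ of the function κ ↦ z_n^{(1)}(κR)/(κ·h_n^{(1)}(κR)) (both functions are complex differentiable in a neighborhood of κ₀). Then there exists a constant C > 0, depending only on κ₀ and R, such that for all families of complex numbers (a_n^m) and (b_n^m), indexed by integers n ≥ 1 and −n ≤ m ≤ n, one has ∑_{n=1}^{∞} ∑_{m=−n}^{n} [ (n(n+1))^{1/2} · |c_n^U|² · |a_n^m|² + (n(n+1))^{−1/2} · |c_n^V|² · |b_n^m|² ] ≤ C · ∑_{n=1}^{∞} ∑_{m=−n}^{n} [ (n(n+1))^{−1/2} · |a_n^m|² + (n(n+1))^{1/2} · |b_n^m|² ], where both sides are sums of nonnegative extended reals. -/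

import Mathlib

open Complex NNReal ENNReal

/-- Spherical Hankel function of the first kind (Rayleigh closed form). -/
noncomputable def sphHankel (n : ℕ) (z : ℂ) : ℂ :=
  (-Complex.I) ^ (n + 1) * (Complex.exp (Complex.I * z) / z) *
    ∑ k ∈ Finset.range (n + 1),
      (Complex.I ^ k / ((Nat.factorial k : ℂ) * (2 * z) ^ k)) *
        ((Nat.factorial (n + k) : ℂ) / (Nat.factorial (n - k) : ℂ))

/-- `z_n^{(1)}(z) = h_n^{(1)}(z) + z * h_n^{(1)'}(z)`. -/
noncomputable def zfun (n : ℕ) (z : ℂ) : ℂ :=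
  sphHankel n z + z * deriv (sphHankel n) z

/-- `n(n+1)` as a nonnegative extended real. -/
noncomputable def lam (n : ℕ) : ℝ≥0∞ := ((n * (n + 1) : ℕ) : ℝ≥0∞)

/-!
Reflecting the Rayleigh sum gives `z h_n(z) = c_n e^{iz} z^{-n} Q_n(z)` with the polynomial
`Q_n(z) = ∑_{j ≤ n} b_{n,j} z^j`, where `|b_{n,j}| ≤ 2^j / j!` and `b_{n,j} → (-i)^j / j!`.
By dominated convergence `Q_n(w) → e^{-iw} ≠ 0`, and the moments `∑ j^p b_{n,j} w^j` converge.

Both functions of `κ` are governed by the logarithmic derivative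
`F_n = (z h_n)' / (z h_n) = i - n/z + Q_n'/Q_n`: the second one is `R F_n(κR)` and the first one
is its reciprocal, so with `w = κ₀R` we get `c_n^V = R² F_n'(w)` and `c_n^U = -F_n'(w) / F_n(w)²`.
From `w F_n(w) / n → -1` and `w² F_n'(w) / n → 1` it follows that `n c_n^U → -1` and
`c_n^V / n → κ₀⁻²` (only large `n` matter here, and for them the denominators are nonzero by
these limits). Hence `n(n+1) |c_n^U|²` and `|c_n^V|² / (n(n+1))` are bounded, which gives the
inequality term by term.
-/

open Finset Filter Topology
open scoped Nat

noncomputable def hankelCoeff (n j : ℕ) : ℂ :=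
  (-I) ^ j * 2 ^ j / j ! * (n.descFactorial j / (2 * n).descFactorial j)

noncomputable def hankelMoment (n p : ℕ) (z : ℂ) : ℂ :=
  ∑ j ∈ range (n + 1), (j : ℂ) ^ p * hankelCoeff n j * z ^ j

lemma hankelCoeff_eq_zero_of_lt {n j : ℕ} (h : n < j) : hankelCoeff n j = 0 := by
  simp [hankelCoeff, Nat.descFactorial_eq_zero_iff_lt.mpr h]

lemma norm_hankelCoeff_le (n j : ℕ) : ‖hankelCoeff n j‖ ≤ 2 ^ j / j ! := by
  have hle : (n.descFactorial j : ℝ) ≤ (2 * n).descFactorial j := by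
    exact_mod_cast Nat.descFactorial_le j (by omega)
  have hratio : ‖(n.descFactorial j : ℂ) / (2 * n).descFactorial j‖ ≤ 1 := by
    rw [norm_div, Complex.norm_natCast, Complex.norm_natCast]
    exact div_le_one_of_le₀ hle (by positivity)
  calc ‖hankelCoeff n j‖ ≤ 2 ^ j / j ! * 1 := by
        rw [hankelCoeff, norm_mul]
        gcongr
        simp
    _ = 2 ^ j / j ! := mul_one _

lemma tendsto_natSub_div_two_mul_natSub (i : ℕ) :
    Tendsto (fun n : ℕ => ((n - i : ℕ) : ℂ) / ((2 * n - i : ℕ) : ℂ)) atTop (𝓝 (1 / 2)) := by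
  have h : Tendsto (fun n : ℕ => (1 - i * (n : ℂ)⁻¹) / (2 - i * (n : ℂ)⁻¹)) atTop
      (𝓝 ((1 - i * 0) / (2 - i * 0))) :=
    ((tendsto_const_nhds.sub (tendsto_const_nhds.mul tendsto_inv_atTop_nhds_zero_nat)).div
      (tendsto_const_nhds.sub (tendsto_const_nhds.mul tendsto_inv_atTop_nhds_zero_nat))
      (by norm_num))
  rw [mul_zero, sub_zero, sub_zero] at h
  refine h.congr' ?_
  filter_upwards [eventually_gt_atTop i] with n hn
  have hn0 : (n : ℂ) ≠ 0 := by exact_mod_cast (show n ≠ 0 by omega)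
  have h2 : (2 * n : ℂ) - i ≠ 0 := by
    exact_mod_cast (show ((2 * n : ℕ) : ℤ) - i ≠ 0 by omega)
  rw [Nat.cast_sub (by omega), Nat.cast_sub (by omega)]
  push_cast
  field_simp

lemma tendsto_hankelCoeff (j : ℕ) :
    Tendsto (fun n => hankelCoeff n j) atTop (𝓝 ((-I) ^ j / j !)) := by
  have hratio : Tendsto (fun n : ℕ => (n.descFactorial j : ℂ) / (2 * n).descFactorial j)
      atTop (𝓝 ((1 / 2) ^ j)) := by
    simp only [Nat.descFactorial_eq_prod_range, Nat.cast_prod]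
    simpa using tendsto_finsetProd (range j) fun i _ => tendsto_natSub_div_two_mul_natSub i
  have hlim : (-I) ^ j * 2 ^ j / j ! * (1 / 2) ^ j = (-I) ^ j / j ! := by
    rw [div_mul_eq_mul_div, mul_assoc, ← mul_pow]
    norm_num
  have h := hratio.const_mul ((-I) ^ j * 2 ^ j / j !)
  rwa [hlim] at h

lemma natCast_pow_le_two_pow_pow (j p : ℕ) : (j : ℝ) ^ p ≤ (2 ^ p) ^ j := by
  rw [← pow_mul, mul_comm, pow_mul]
  gcongr
  exact_mod_cast (Nat.lt_two_pow_self (n := j)).le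

lemma tendsto_hankelMoment (p : ℕ) (w : ℂ) :
    Tendsto (fun n => hankelMoment n p w) atTop
      (𝓝 (∑' j : ℕ, (j : ℂ) ^ p * ((-I) ^ j / j !) * w ^ j)) := by
  have htsum (n : ℕ) : hankelMoment n p w = ∑' j : ℕ, (j : ℂ) ^ p * hankelCoeff n j * w ^ j :=
    (tsum_eq_sum fun j hj => by
      rw [hankelCoeff_eq_zero_of_lt (by simpa using hj), mul_zero, zero_mul]).symm
  simp only [htsum]
  refine tendsto_tsum_of_dominated_convergence
    (Real.summable_pow_div_factorial (2 ^ (p + 1) * ‖w‖))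
    (fun j => ((tendsto_hankelCoeff j).const_mul _).mul_const _)
    (Eventually.of_forall fun n j => ?_)
  calc ‖(j : ℂ) ^ p * hankelCoeff n j * w ^ j‖
      ≤ (2 ^ p) ^ j * (2 ^ j / j !) * ‖w‖ ^ j := by
        rw [norm_mul, norm_mul, norm_pow, norm_pow, Complex.norm_natCast]
        gcongr
        · exact natCast_pow_le_two_pow_pow j p
        · exact norm_hankelCoeff_le n j
    _ = (2 ^ (p + 1) * ‖w‖) ^ j / j ! := by ring

lemma tendsto_hankelMoment_zero (w : ℂ) :
    Tendsto (fun n => hankelMoment n 0 w) atTop (𝓝 (exp (-I * w))) := by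
  have hexp : ∑' j : ℕ, (j : ℂ) ^ 0 * ((-I) ^ j / j !) * w ^ j = exp (-I * w) := by
    rw [Complex.exp_eq_exp_ℂ, NormedSpace.exp_eq_tsum_div]
    congr 1 with j
    ring
  simpa only [hexp] using tendsto_hankelMoment 0 w

lemma hasDerivAt_hankelMoment (n p : ℕ) {z : ℂ} (hz : z ≠ 0) :
    HasDerivAt (hankelMoment n p) (hankelMoment n (p + 1) z / z) z := by
  unfold hankelMoment
  rw [sum_div]
  refine HasDerivAt.fun_sum fun j _ => ?_
  refine ((hasDerivAt_pow j z).const_mul ((j : ℂ) ^ p * hankelCoeff n j)).congr_deriv ?_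
  rcases j with _ | j
  · simp
  · rw [Nat.add_sub_cancel, pow_succ' z j]
    field_simp
    push_cast
    ring

noncomputable def hankelConst (n : ℕ) : ℂ := -I * (2 * n) ! / (n ! * 2 ^ n)

lemma hankelConst_ne_zero (n : ℕ) : hankelConst n ≠ 0 := by
  simp [hankelConst, I_ne_zero, Nat.factorial_ne_zero]

lemma sphHankel_eq (n : ℕ) {z : ℂ} (hz : z ≠ 0) :
    sphHankel n z = hankelConst n * exp (I * z) * hankelMoment n 0 z / z ^ (n + 1) := by
  rw [sphHankel, ← sum_range_reflect, hankelMoment, mul_sum, mul_sum, sum_div]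
  refine sum_congr rfl fun j hj => ?_
  obtain ⟨m, rfl⟩ : ∃ m, n = j + m := ⟨n - j, by simp at hj; omega⟩
  have hD1 := Nat.factorial_mul_descFactorial (show j ≤ j + m by omega)
  have hD2 := Nat.factorial_mul_descFactorial (show j ≤ 2 * (j + m) by omega)
  rw [show j + m - j = m by omega] at hD1
  rw [show 2 * (j + m) - j = j + m + m by omega] at hD2
  rw [show j + m + 1 - 1 - j = m by omega, show j + m - m = j by omega, hankelConst, hankelCoeff,
    ← hD1, ← hD2]
  have hD1' : ((j + m).descFactorial j : ℂ) ≠ 0 := by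
    exact_mod_cast (Nat.descFactorial_pos.mpr (by omega)).ne'
  have hD2' : ((2 * (j + m)).descFactorial j : ℂ) ≠ 0 := by
    exact_mod_cast (Nat.descFactorial_pos.mpr (by omega)).ne'
  have hI : (-I) ^ m * I ^ m = 1 := by rw [← mul_pow]; simp
  push_cast
  field_simp
  linear_combination ((-I) ^ (j + 1) * ((j + m + m)! : ℂ) * 2 ^ (j + m) * z ^ (j + m + 1) /
    (m ! * j !)) * hI

noncomputable def hankelLogDeriv (n : ℕ) (z : ℂ) : ℂ :=
  I - n / z + hankelMoment n 1 z / (z * hankelMoment n 0 z)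

noncomputable def hankelLogDeriv' (n : ℕ) (z : ℂ) : ℂ :=
  n / z ^ 2 + (hankelMoment n 0 z * hankelMoment n 2 z - hankelMoment n 0 z * hankelMoment n 1 z
    - hankelMoment n 1 z ^ 2) / (z * hankelMoment n 0 z) ^ 2

lemma hasDerivAt_hankelLogDeriv (n : ℕ) {z : ℂ} (hz : z ≠ 0) (hQ : hankelMoment n 0 z ≠ 0) :
    HasDerivAt (hankelLogDeriv n) (hankelLogDeriv' n z) z := by
  have hzQ : HasDerivAt (fun x => x * hankelMoment n 0 x)
      (1 * hankelMoment n 0 z + z * (hankelMoment n 1 z / z)) z :=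
    (hasDerivAt_id z).mul (hasDerivAt_hankelMoment n 0 hz)
  have h := ((hasDerivAt_const z I).sub ((hasDerivAt_inv hz).const_mul (n : ℂ))).add
    ((hasDerivAt_hankelMoment n 1 hz).div hzQ (mul_ne_zero hz hQ))
  refine (h.congr_deriv ?_).congr_of_eventuallyEq (Eventually.of_forall fun x => ?_)
  · rw [hankelLogDeriv']
    field_simp
    ring
  · simp [hankelLogDeriv, div_eq_mul_inv]

lemma zfun_div_eq_hankelLogDeriv (n : ℕ) {z : ℂ} (hz : z ≠ 0) (hQ : hankelMoment n 0 z ≠ 0) :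
    zfun n z / (z * sphHankel n z) = hankelLogDeriv n z := by
  set G := fun x => hankelConst n * exp (I * x) * hankelMoment n 0 x / x ^ n
  have hG : HasDerivAt G (G z * hankelLogDeriv n z) z := by
    have h := (((hasDerivAt_id' z).const_mul I).cexp.const_mul (hankelConst n)).mul
      (hasDerivAt_hankelMoment n 0 hz) |>.div (hasDerivAt_pow n z) (pow_ne_zero n hz)
    refine h.congr_deriv ?_
    simp only [G, hankelLogDeriv, Pi.mul_apply, zero_add, mul_one]
    rcases n with _ | n
    · field_simp
      ring
    · rw [Nat.add_sub_cancel, pow_succ]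
      field_simp
      ring
  have hh : sphHankel n =ᶠ[𝓝 z] fun x => G x / x := by
    filter_upwards [eventually_ne_nhds hz] with x hx
    rw [sphHankel_eq n hx, pow_succ, ← div_div]
  have hG0 : G z ≠ 0 := div_ne_zero (mul_ne_zero (mul_ne_zero (hankelConst_ne_zero n)
    (exp_ne_zero _)) hQ) (pow_ne_zero n hz)
  rw [zfun, ((hG.div (hasDerivAt_id' z) hz).congr_of_eventuallyEq hh).deriv, hh.eq_of_nhds]
  field_simp
  ring

lemma zfun_div_mul_sphHankel_eq (n : ℕ) {R : ℂ} (hR : R ≠ 0) (κ : ℂ) :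
    zfun n (κ * R) / (κ * sphHankel n (κ * R)) =
      R * (zfun n (κ * R) / (κ * R * sphHankel n (κ * R))) := by
  rw [← mul_div_mul_left _ (κ * sphHankel n (κ * R)) hR]
  ring

lemma hasDerivAt_zfun_div_mul_sphHankel (n : ℕ) {κ₀ R : ℂ} (hκ₀ : κ₀ ≠ 0) (hR : R ≠ 0)
    (hQ : hankelMoment n 0 (κ₀ * R) ≠ 0) :
    HasDerivAt (fun κ => zfun n (κ * R) / (κ * sphHankel n (κ * R)))
      (R ^ 2 * hankelLogDeriv' n (κ₀ * R)) κ₀ := by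
  have hw : κ₀ * R ≠ 0 := mul_ne_zero hκ₀ hR
  have hlocal : (fun z => zfun n z / (z * sphHankel n z)) =ᶠ[𝓝 (κ₀ * R)] hankelLogDeriv n := by
    filter_upwards [eventually_ne_nhds hw,
      (hasDerivAt_hankelMoment n 0 hw).continuousAt.eventually_ne hQ] with z hz hQz
    exact zfun_div_eq_hankelLogDeriv n hz hQz
  have h := ((hasDerivAt_hankelLogDeriv n hw hQ).congr_of_eventuallyEq hlocal).comp κ₀
    (hasDerivAt_mul_const R)
  exact ((h.const_mul R).congr_deriv (by ring)).congr_of_eventuallyEq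
    (Eventually.of_forall (zfun_div_mul_sphHankel_eq n hR))

lemma hasDerivAt_mul_sphHankel_div_zfun (n : ℕ) {κ₀ R : ℂ} (hκ₀ : κ₀ ≠ 0) (hR : R ≠ 0)
    (hQ : hankelMoment n 0 (κ₀ * R) ≠ 0) (hF : hankelLogDeriv n (κ₀ * R) ≠ 0) :
    HasDerivAt (fun κ => κ * sphHankel n (κ * R) / zfun n (κ * R))
      (-hankelLogDeriv' n (κ₀ * R) / hankelLogDeriv n (κ₀ * R) ^ 2) κ₀ := by
  have hval : zfun n (κ₀ * R) / (κ₀ * sphHankel n (κ₀ * R)) = R * hankelLogDeriv n (κ₀ * R) := by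
    rw [zfun_div_mul_sphHankel_eq n hR, zfun_div_eq_hankelLogDeriv n (mul_ne_zero hκ₀ hR) hQ]
  have h := (hasDerivAt_zfun_div_mul_sphHankel n hκ₀ hR hQ).inv
    (by rw [hval]; exact mul_ne_zero hR hF)
  rw [hval] at h
  refine (h.congr_deriv ?_).congr_of_eventuallyEq (Eventually.of_forall fun κ => (inv_div _ _).symm)
  field_simp

lemma tendsto_mul_hankelLogDeriv_div_natCast {w : ℂ} (hw : w ≠ 0) :
    Tendsto (fun n : ℕ => w * hankelLogDeriv n w / n) atTop (𝓝 (-1)) := by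
  have hquot := (tendsto_hankelMoment 1 w).div (tendsto_hankelMoment_zero w) (exp_ne_zero _)
  have h := ((tendsto_const_nhds (x := I * w)).add hquot).mul
    (tendsto_inv_atTop_nhds_zero_nat (𝕜 := ℂ)) |>.sub_const 1
  rw [mul_zero, zero_sub] at h
  refine h.congr' ?_
  filter_upwards [eventually_ne_atTop 0] with n hn
  rw [hankelLogDeriv, Pi.div_apply]
  field_simp
  ring

lemma tendsto_sq_mul_hankelLogDeriv'_div_natCast {w : ℂ} (hw : w ≠ 0) :
    Tendsto (fun n : ℕ => w ^ 2 * hankelLogDeriv' n w / n) atTop (𝓝 1) := by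
  have hQ0 := tendsto_hankelMoment_zero w
  have hquot := (((hQ0.mul (tendsto_hankelMoment 2 w)).sub (hQ0.mul (tendsto_hankelMoment 1 w))).sub
    ((tendsto_hankelMoment 1 w).pow 2)).div (hQ0.pow 2) (pow_ne_zero 2 (exp_ne_zero _))
  have h := (hquot.mul (tendsto_inv_atTop_nhds_zero_nat (𝕜 := ℂ))).const_add 1
  rw [mul_zero, add_zero] at h
  refine h.congr' ?_
  filter_upwards [eventually_ne_atTop 0] with n hn
  rw [hankelLogDeriv', Pi.div_apply]
  field_simp

lemma eventually_hankelMoment_zero_ne_zero (w : ℂ) : ∀ᶠ n in atTop, hankelMoment n 0 w ≠ 0 :=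
  (tendsto_hankelMoment_zero w).eventually_ne (exp_ne_zero _)

lemma tendsto_natCast_mul_deriv_mul_sphHankel_div_zfun {κ₀ R : ℂ} (hκ₀ : κ₀ ≠ 0) (hR : R ≠ 0) :
    Tendsto (fun n : ℕ => n * deriv (fun κ => κ * sphHankel n (κ * R) / zfun n (κ * R)) κ₀)
      atTop (𝓝 (-1)) := by
  have hw : κ₀ * R ≠ 0 := mul_ne_zero hκ₀ hR
  have hF := tendsto_mul_hankelLogDeriv_div_natCast hw
  have h := ((tendsto_sq_mul_hankelLogDeriv'_div_natCast hw).div (hF.pow 2) (by norm_num)).neg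
  rw [show -(1 / (-1 : ℂ) ^ 2) = -1 by norm_num] at h
  refine h.congr' ?_
  filter_upwards [eventually_ne_atTop 0, eventually_hankelMoment_zero_ne_zero (κ₀ * R),
    hF.eventually_ne (show (-1 : ℂ) ≠ 0 by norm_num)] with n hn hQ hFn
  have hFn' : hankelLogDeriv n (κ₀ * R) ≠ 0 := fun h0 => hFn (by rw [h0]; simp)
  rw [(hasDerivAt_mul_sphHankel_div_zfun n hκ₀ hR hQ hFn').deriv, Pi.div_apply]
  field_simp

lemma tendsto_deriv_zfun_div_mul_sphHankel_div_natCast {κ₀ R : ℂ} (hκ₀ : κ₀ ≠ 0) (hR : R ≠ 0) :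
    Tendsto (fun n : ℕ => deriv (fun κ => zfun n (κ * R) / (κ * sphHankel n (κ * R))) κ₀ / n)
      atTop (𝓝 (κ₀ ^ 2)⁻¹) := by
  have hw : κ₀ * R ≠ 0 := mul_ne_zero hκ₀ hR
  have h := (tendsto_sq_mul_hankelLogDeriv'_div_natCast hw).const_mul (κ₀ ^ 2)⁻¹
  rw [mul_one] at h
  refine h.congr' ?_
  filter_upwards [eventually_hankelMoment_zero_ne_zero (κ₀ * R)] with n hQ
  rw [(hasDerivAt_zfun_div_mul_sphHankel n hκ₀ hR hQ).deriv]
  field_simp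

lemma lam_eq_ofReal (n : ℕ) : lam n = ENNReal.ofReal (n * (n + 1)) := by
  rw [lam, ← ENNReal.ofReal_natCast]
  push_cast
  rfl

lemma coe_nnnorm_sq_eq_ofReal (x : ℂ) : (‖x‖₊ : ℝ≥0∞) ^ 2 = ENNReal.ofReal (‖x‖ ^ 2) := by
  rw [ENNReal.ofReal_pow (norm_nonneg x), ofReal_norm, enorm_eq_nnnorm]

lemma lam_mul_nnnorm_sq_le {x : ℂ} {M : ℝ} {n : ℕ} (h : ‖(n : ℂ) * x‖ ≤ M) :
    lam n * (‖x‖₊ : ℝ≥0∞) ^ 2 ≤ ENNReal.ofReal (2 * M ^ 2) := by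
  rw [norm_mul, Complex.norm_natCast] at h
  have hn : (n : ℝ) ≤ n ^ 2 := by exact_mod_cast Nat.le_self_pow two_ne_zero n
  have hsq : ((n : ℝ) * ‖x‖) ^ 2 ≤ M ^ 2 := pow_le_pow_left₀ (by positivity) h 2
  rw [lam_eq_ofReal, coe_nnnorm_sq_eq_ofReal, ← ENNReal.ofReal_mul (by positivity)]
  refine ENNReal.ofReal_le_ofReal ?_
  nlinarith [sq_nonneg ‖x‖]

lemma nnnorm_sq_le_mul_lam {x : ℂ} {M : ℝ} {n : ℕ} (hn : n ≠ 0) (h : ‖x / n‖ ≤ M) :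
    (‖x‖₊ : ℝ≥0∞) ^ 2 ≤ ENNReal.ofReal (M ^ 2) * lam n := by
  have hn' : (0 : ℝ) < n := by exact_mod_cast Nat.pos_of_ne_zero hn
  rw [norm_div, Complex.norm_natCast, div_le_iff₀ hn'] at h
  have hsq : ‖x‖ ^ 2 ≤ (M * n) ^ 2 := pow_le_pow_left₀ (norm_nonneg x) h 2
  rw [lam_eq_ofReal, coe_nnnorm_sq_eq_ofReal, ← ENNReal.ofReal_mul (sq_nonneg M)]
  refine ENNReal.ofReal_le_ofReal ?_
  nlinarith [sq_nonneg M]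

lemma rpow_half_weighted_le {l C x y A B : ℝ≥0∞} (hl₀ : l ≠ 0) (hl : l ≠ ⊤)
    (hx : l * x ≤ C) (hy : y ≤ C * l) :
    l ^ ((1 : ℝ) / 2) * x * A + l ^ (-(1 : ℝ) / 2) * y * B ≤
      C * (l ^ (-(1 : ℝ) / 2) * A + l ^ ((1 : ℝ) / 2) * B) := by
  have hsplit : l ^ ((1 : ℝ) / 2) = l ^ (-(1 : ℝ) / 2) * l := by
    rw [show (1 : ℝ) / 2 = -(1 : ℝ) / 2 + 1 by norm_num, ENNReal.rpow_add _ _ hl₀ hl,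
      ENNReal.rpow_one]
  calc l ^ ((1 : ℝ) / 2) * x * A + l ^ (-(1 : ℝ) / 2) * y * B
      = l ^ (-(1 : ℝ) / 2) * (l * x) * A + l ^ (-(1 : ℝ) / 2) * y * B := by rw [hsplit]; ring
    _ ≤ l ^ (-(1 : ℝ) / 2) * C * A + l ^ (-(1 : ℝ) / 2) * (C * l) * B := by gcongr
    _ = C * (l ^ (-(1 : ℝ) / 2) * A + l ^ ((1 : ℝ) / 2) * B) := by rw [hsplit]; ring

lemma exists_weighted_tsum_le {u v : ℕ → ℂ} {M : ℝ} (hu : ∀ n : ℕ, ‖(n : ℂ) * u n‖ ≤ M)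
    (hv : ∀ n, ‖v n / n‖ ≤ M) :
    ∃ C : ℝ≥0∞, 0 < C ∧ C ≠ ⊤ ∧ ∀ a b : ℕ → ℤ → ℂ,
      (∑' k : ℕ, ∑ m ∈ Icc (-((k + 1 : ℕ) : ℤ)) ((k + 1 : ℕ) : ℤ),
        (lam (k + 1) ^ ((1 : ℝ) / 2) * (‖u (k + 1)‖₊ : ℝ≥0∞) ^ 2 * (‖a (k + 1) m‖₊ : ℝ≥0∞) ^ 2
          + lam (k + 1) ^ (-(1 : ℝ) / 2) * (‖v (k + 1)‖₊ : ℝ≥0∞) ^ 2 * (‖b (k + 1) m‖₊ : ℝ≥0∞) ^ 2))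
      ≤ C * ∑' k : ℕ, ∑ m ∈ Icc (-((k + 1 : ℕ) : ℤ)) ((k + 1 : ℕ) : ℤ),
          (lam (k + 1) ^ (-(1 : ℝ) / 2) * (‖a (k + 1) m‖₊ : ℝ≥0∞) ^ 2
            + lam (k + 1) ^ ((1 : ℝ) / 2) * (‖b (k + 1) m‖₊ : ℝ≥0∞) ^ 2) := by
  refine ⟨ENNReal.ofReal (2 * M ^ 2 + 1), by positivity, ENNReal.ofReal_ne_top, fun a b => ?_⟩
  have hC : ENNReal.ofReal (2 * M ^ 2) ≤ ENNReal.ofReal (2 * M ^ 2 + 1) :=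
    ENNReal.ofReal_le_ofReal (by linarith)
  have hC' : ENNReal.ofReal (M ^ 2) ≤ ENNReal.ofReal (2 * M ^ 2 + 1) :=
    ENNReal.ofReal_le_ofReal (by nlinarith [sq_nonneg M])
  rw [← ENNReal.tsum_mul_left]
  refine ENNReal.tsum_le_tsum fun k => ?_
  rw [mul_sum]
  refine sum_le_sum fun m _ => rpow_half_weighted_le (by simp [lam])
    (ENNReal.natCast_ne_top _)
    ((lam_mul_nnnorm_sq_le (hu _)).trans hC)
    ((nnnorm_sq_le_mul_lam k.succ_ne_zero (hv _)).trans (by gcongr))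

theorem dtn_derivative_coeff_bound_general (κ₀ : ℂ) (hκ₀ : κ₀ ≠ 0) (R : ℝ) (hR : 0 < R) :
    ∃ C : ℝ≥0∞, 0 < C ∧ C ≠ ⊤ ∧ ∀ a b : ℕ → ℤ → ℂ,
      (∑' k : ℕ, ∑ m ∈ Finset.Icc (-((k + 1 : ℕ) : ℤ)) ((k + 1 : ℕ) : ℤ),
        (lam (k + 1) ^ ((1 : ℝ) / 2) *
            (‖deriv (fun κ : ℂ =>
                κ * sphHankel (k + 1) (κ * R) / zfun (k + 1) (κ * R)) κ₀‖₊ : ℝ≥0∞) ^ 2 *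
            (‖a (k + 1) m‖₊ : ℝ≥0∞) ^ 2
          + lam (k + 1) ^ (-(1 : ℝ) / 2) *
            (‖deriv (fun κ : ℂ =>
                zfun (k + 1) (κ * R) / (κ * sphHankel (k + 1) (κ * R))) κ₀‖₊ : ℝ≥0∞) ^ 2 *
            (‖b (k + 1) m‖₊ : ℝ≥0∞) ^ 2))
      ≤ C * ∑' k : ℕ, ∑ m ∈ Finset.Icc (-((k + 1 : ℕ) : ℤ)) ((k + 1 : ℕ) : ℤ),
          (lam (k + 1) ^ (-(1 : ℝ) / 2) * (‖a (k + 1) m‖₊ : ℝ≥0∞) ^ 2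
            + lam (k + 1) ^ ((1 : ℝ) / 2) * (‖b (k + 1) m‖₊ : ℝ≥0∞) ^ 2) := by
  have hR' : (R : ℂ) ≠ 0 := ofReal_ne_zero.mpr hR.ne'
  obtain ⟨MU, hMU⟩ := (tendsto_natCast_mul_deriv_mul_sphHankel_div_zfun hκ₀ hR').norm.bddAbove_range
  obtain ⟨MV, hMV⟩ :=
    (tendsto_deriv_zfun_div_mul_sphHankel_div_natCast hκ₀ hR').norm.bddAbove_range
  exact exists_weighted_tsum_le (M := max MU MV)
    (u := fun n => deriv (fun κ : ℂ => κ * sphHankel n (κ * R) / zfun n (κ * R)) κ₀)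
    (v := fun n => deriv (fun κ : ℂ => zfun n (κ * R) / (κ * sphHankel n (κ * R))) κ₀)
    (fun n => (hMU ⟨n, rfl⟩).trans (le_max_left _ _))
    (fun n => (hMV ⟨n, rfl⟩).trans (le_max_right _ _))

theorem dtn_derivative_coeff_bound (κ₀ : ℂ) (hκ₀ : κ₀ ≠ 0) (R : ℝ) (hR : 0 < R)
    (hh : ∀ n : ℕ, 1 ≤ n → sphHankel n (κ₀ * R) ≠ 0)
    (hz : ∀ n : ℕ, 1 ≤ n → zfun n (κ₀ * R) ≠ 0) :
    ∃ C : ℝ≥0∞, 0 < C ∧ C ≠ ⊤ ∧ ∀ a b : ℕ → ℤ → ℂ,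
      (∑' k : ℕ, ∑ m ∈ Finset.Icc (-((k + 1 : ℕ) : ℤ)) ((k + 1 : ℕ) : ℤ),
        (lam (k + 1) ^ ((1 : ℝ) / 2) *
            (‖deriv (fun κ : ℂ =>
                κ * sphHankel (k + 1) (κ * R) / zfun (k + 1) (κ * R)) κ₀‖₊ : ℝ≥0∞) ^ 2 *
            (‖a (k + 1) m‖₊ : ℝ≥0∞) ^ 2
          + lam (k + 1) ^ (-(1 : ℝ) / 2) *
            (‖deriv (fun κ : ℂ =>
                zfun (k + 1) (κ * R) / (κ * sphHankel (k + 1) (κ * R))) κ₀‖₊ : ℝ≥0∞) ^ 2 *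
            (‖b (k + 1) m‖₊ : ℝ≥0∞) ^ 2))
      ≤ C * ∑' k : ℕ, ∑ m ∈ Finset.Icc (-((k + 1 : ℕ) : ℤ)) ((k + 1 : ℕ) : ℤ),
          (lam (k + 1) ^ (-(1 : ℝ) / 2) * (‖a (k + 1) m‖₊ : ℝ≥0∞) ^ 2
            + lam (k + 1) ^ ((1 : ℝ) / 2) * (‖b (k + 1) m‖₊ : ℝ≥0∞) ^ 2) :=
  dtn_derivative_coeff_bound_general κ₀ hκ₀ R hR
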